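/- For nontrivial, surjective, monotone, output-rough (J,K) games u and w on n players, the influence measure φ satisfies the transfer axiom: φ_i(u) + φ_i(w) = φ_i(u ∨ w) + φ_i(u ∧ w) for every player i. -/

import Mathlib

open Finset

/-- The set of still-possible outcomes after the first `h` players (according to `π`,
player `l` being called at position `π l`, 0-indexed) have declared votes from `a`. -/
def reach {n : ℕ} {J : Type*} [Fintype J] [DecidableEq J]
    (v : (Fin n → J) → ℤ) (π : Equiv.Perm (Fin n)) (a : Fin n → J) (h : ℕ) : Finset ℤ :=
  (Finset.univ.filter (fun a' : Fin n → J => ∀ l, (π l : ℕ) < h → a' l = a l)).image v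

/-- Output-roughness: every reachable-outcome set is an integer interval. -/
def OutputRough {n : ℕ} {J : Type*} [Fintype J] [DecidableEq J]
    (v : (Fin n → J) → ℤ) : Prop :=
  ∀ (a : Fin n → J) (π : Equiv.Perm (Fin n)) (h : ℕ),
    ∃ α β : ℤ, reach v π a h = Finset.Icc α β

/-- `τ` for player `i` (at 1-indexed position `π i + 1`). -/
def tau {n : ℕ} {J : Type*} [Fintype J] [DecidableEq J]
    (v : (Fin n → J) → ℤ) (π : Equiv.Perm (Fin n)) (a : Fin n → J) (i : Fin n) : ℕ :=
  (reach v π a (π i)).card - (reach v π a ((π i : ℕ) + 1)).card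

/-- The influence measure `φ_i` of Definition 3.2. -/
noncomputable def phi {n : ℕ} {J : Type*} [Fintype J] [DecidableEq J]
    (v : (Fin n → J) → ℤ) (i : Fin n) : ℝ :=
  (1 / ((n.factorial : ℝ) * (Fintype.card J : ℝ) ^ n *
      (((Finset.univ.image v).card : ℝ) - 1))) *
    ∑ π : Equiv.Perm (Fin n), ∑ a : Fin n → J, (tau v π a i : ℝ)

/-! For a monotone game `v`, the outcomes still reachable after the players called so far have
voted form the image of a box `[lo, hi]` of the product order, so they lie in `[v lo, v hi]` and
include both ends. Output-roughness makes `u` and `w` move by at most one along every covering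
step of the product order; `u ∨ w` and `u ∧ w` inherit this, and a discrete intermediate value
argument shows that their reachable sets are intervals as well. Each `τ` is then a difference
of widths `v hi - v lo`, and `max x y + min x y = x + y` gives the identity term by term. The four
normalisations agree because all four games have the image `[u ⊥, u ⊤]`. -/

def CovByLipschitz {α : Type*} [Preorder α] (v : α → ℤ) : Prop :=
  ∀ ⦃a b : α⦄, a ⋖ b → v b ≤ v a + 1

namespace CovByLipschitz

variable {α : Type*} [PartialOrder α] {u w : α → ℤ}

theorem max (hu : CovByLipschitz u) (hw : CovByLipschitz w) :
    CovByLipschitz fun a => max (u a) (w a) := fun _ _ h => by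
  dsimp only
  have := hu h; have := hw h; omega

theorem min (hu : CovByLipschitz u) (hw : CovByLipschitz w) :
    CovByLipschitz fun a => min (u a) (w a) := fun _ _ h => by
  dsimp only
  have := hu h; have := hw h; omega

theorem Icc_subset_image_Icc [Finite α] (hu : CovByLipschitz u) {lo hi : α} (h : lo ≤ hi) :
    Set.Icc (u lo) (u hi) ⊆ u '' Set.Icc lo hi := by
  induction hi using WellFoundedLT.induction with
  | _ hi ih =>
    rintro x ⟨hlo, hhi⟩
    rcases hhi.eq_or_lt with rfl | hlt
    · exact ⟨hi, ⟨h, le_rfl⟩, rfl⟩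
    obtain ⟨z, hlz, hz⟩ := exists_le_covBy_of_lt (h.lt_of_ne (by rintro rfl; omega))
    obtain ⟨c, hc, rfl⟩ := ih z hz.lt hlz ⟨hlo, by linarith [hu hz]⟩
    exact ⟨c, ⟨hc.1, hc.2.trans hz.le⟩, rfl⟩

theorem image_Icc [Finite α] (hu : CovByLipschitz u) (hmono : Monotone u) {lo hi : α}
    (h : lo ≤ hi) : u '' Set.Icc lo hi = Set.Icc (u lo) (u hi) :=
  hmono.image_Icc_subset.antisymm (hu.Icc_subset_image_Icc h)

end CovByLipschitz

theorem covByLipschitz_of_ordConnected_image_line {ι J : Type*} [DecidableEq ι] [LinearOrder J]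
    {v : (ι → J) → ℤ} (hmono : Monotone v)
    (hline : ∀ a l, (v '' {c | Set.EqOn c a {l}ᶜ}).OrdConnected) : CovByLipschitz v := by
  intro a b hab
  obtain ⟨l, x, hax, rfl⟩ := Pi.covBy_iff_exists_right_eq.mp hab
  by_contra! hjump
  -- `v a + 1` is reached on the line through `a`, at a point that must lie strictly between
  -- `a l` and its cover `x`.
  have hmem : v a + 1 ∈ v '' {c | Set.EqOn c a {l}ᶜ} :=
    (hline a l).out ⟨a, Set.eqOn_refl _ _, rfl⟩
      ⟨Function.update a l x, fun m hm => Function.update_of_ne hm _ _, rfl⟩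
      ⟨by omega, hjump.le⟩
  obtain ⟨c, hc, hvc⟩ := hmem
  rcases le_or_gt (c l) (a l) with hle | hlt
  · have : c ≤ a := fun m => by
      rcases eq_or_ne m l with rfl | hm
      · exact hle
      · exact (hc hm).le
    have := hmono this; omega
  · have : Function.update a l x ≤ c :=
      update_le_iff.2 ⟨hax.ge_of_gt hlt, fun m hm => (hc hm).ge⟩
    have := hmono this; omega

theorem setOf_eqOn_eq_Icc_piecewise {ι J : Type*} [PartialOrder J] [BoundedOrder J]
    (s : Set ι) [DecidablePred (· ∈ s)] (a : ι → J) :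
    {c | Set.EqOn c a s} = Set.Icc (s.piecewise a ⊥) (s.piecewise a ⊤) := by
  ext c
  constructor
  · intro hc
    exact ⟨Set.piecewise_le (fun i hi => (hc hi).ge) (fun _ _ => bot_le),
      Set.le_piecewise (fun i hi => (hc hi).le) (fun _ _ => le_top)⟩
  · rintro ⟨hlo, hhi⟩ i hi
    exact le_antisymm (by simpa [hi] using hhi i) (by simpa [hi] using hlo i)

theorem piecewise_bot_le_piecewise_top {ι J : Type*} [Preorder J] [BoundedOrder J]
    (s : Set ι) [DecidablePred (· ∈ s)] (a : ι → J) : s.piecewise a ⊥ ≤ s.piecewise a ⊤ :=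
  Set.piecewise_mono (f₂ := ⊥) (g₂ := ⊤) (fun _ _ => le_rfl) fun _ _ => bot_le

section Games

variable {n : ℕ} {J : Type*} [Fintype J] [LinearOrder J]

theorem coe_reach (v : (Fin n → J) → ℤ) (π : Equiv.Perm (Fin n)) (a : Fin n → J) (h : ℕ) :
    (reach v π a h : Set ℤ) = v '' {c | Set.EqOn c a {l | (π l : ℕ) < h}} := by
  ext; simp [reach, Set.EqOn]

theorem reach_antitone (v : (Fin n → J) → ℤ) (π : Equiv.Perm (Fin n)) (a : Fin n → J) :
    Antitone (reach v π a) := fun _ _ hh =>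
  image_subset_image (monotone_filter_right _ fun _ _ hc l hl => hc l (by omega))

theorem cast_tau (v : (Fin n → J) → ℤ) (π : Equiv.Perm (Fin n)) (a : Fin n → J) (i : Fin n) :
    (tau v π a i : ℤ) = #(reach v π a (π i)) - #(reach v π a ((π i : ℕ) + 1)) :=
  Nat.cast_sub (card_le_card (reach_antitone v π a (Nat.le_succ _)))

theorem exists_perm_setOf_lt_eq_compl_singleton (l : Fin n) :
    ∃ (π : Equiv.Perm (Fin n)) (h : ℕ), {m | (π m : ℕ) < h} = {l}ᶜ := by
  obtain ⟨k, rfl⟩ := Nat.exists_eq_succ_of_ne_zero l.pos.ne'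
  refine ⟨Equiv.swap l (Fin.last k), k, Set.ext fun m => ?_⟩
  have hlast : ((Equiv.swap l (Fin.last k) m : ℕ) < k) ↔
      Equiv.swap l (Fin.last k) m < Fin.last k := by
    rw [Fin.lt_def, Fin.val_last]
  rw [Set.mem_ofPred_eq, hlast, Fin.lt_last_iff_ne_last, Ne, Equiv.swap_apply_eq_iff,
    Equiv.swap_apply_right, Set.mem_compl_singleton_iff]

theorem OutputRough.ordConnected_image {v : (Fin n → J) → ℤ} (hr : OutputRough v)
    (π : Equiv.Perm (Fin n)) (a : Fin n → J) (h : ℕ) :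
    (v '' {c | Set.EqOn c a {l | (π l : ℕ) < h}}).OrdConnected := by
  obtain ⟨α, β, hαβ⟩ := hr a π h
  rw [← coe_reach, hαβ, coe_Icc]
  exact Set.ordConnected_Icc

theorem OutputRough.covByLipschitz {v : (Fin n → J) → ℤ} (hmono : Monotone v)
    (hr : OutputRough v) : CovByLipschitz v :=
  covByLipschitz_of_ordConnected_image_line hmono fun a l => by
    obtain ⟨π, h, hπ⟩ := exists_perm_setOf_lt_eq_compl_singleton l
    simpa only [hπ] using hr.ordConnected_image π a h

variable [BoundedOrder J] {u w : (Fin n → J) → ℤ}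

theorem reach_eq_Icc (hv : CovByLipschitz u) (hmono : Monotone u)
    (π : Equiv.Perm (Fin n)) (a : Fin n → J) (h : ℕ) :
    reach u π a h = Icc (u ({l | (π l : ℕ) < h}.piecewise a ⊥))
      (u ({l | (π l : ℕ) < h}.piecewise a ⊤)) := by
  refine coe_injective ?_
  rw [coe_reach, setOf_eqOn_eq_Icc_piecewise,
    hv.image_Icc hmono (piecewise_bot_le_piecewise_top _ a), coe_Icc]

theorem card_reach (hv : CovByLipschitz u) (hmono : Monotone u)
    (π : Equiv.Perm (Fin n)) (a : Fin n → J) (h : ℕ) :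
    (#(reach u π a h) : ℤ) = u ({l | (π l : ℕ) < h}.piecewise a ⊤) -
      u ({l | (π l : ℕ) < h}.piecewise a ⊥) + 1 := by
  have := hmono (piecewise_bot_le_piecewise_top {l | (π l : ℕ) < h} a)
  rw [reach_eq_Icc hv hmono, Int.card_Icc, Int.toNat_of_nonneg (by omega)]
  ring

theorem card_reach_add_card_reach (hu : CovByLipschitz u) (hw : CovByLipschitz w)
    (hum : Monotone u) (hwm : Monotone w) (π : Equiv.Perm (Fin n)) (a : Fin n → J) (h : ℕ) :
    (#(reach u π a h) : ℤ) + #(reach w π a h) =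
      #(reach (fun a => max (u a) (w a)) π a h) +
        #(reach (fun a => min (u a) (w a)) π a h) := by
  rw [card_reach hu hum, card_reach hw hwm, card_reach (hu.max hw) (hum.max hwm),
    card_reach (hu.min hw) (hum.min hwm)]
  omega

theorem tau_add_tau (hu : CovByLipschitz u) (hw : CovByLipschitz w)
    (hum : Monotone u) (hwm : Monotone w) (π : Equiv.Perm (Fin n)) (a : Fin n → J) (i : Fin n) :
    tau u π a i + tau w π a i =
      tau (fun a => max (u a) (w a)) π a i + tau (fun a => min (u a) (w a)) π a i := by
  have hp := card_reach_add_card_reach hu hw hum hwm π a (π i)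
  have hp₁ := card_reach_add_card_reach hu hw hum hwm π a ((π i : ℕ) + 1)
  zify
  rw [cast_tau, cast_tau, cast_tau, cast_tau]
  linarith

theorem image_univ_eq_Icc (hv : CovByLipschitz u) (hmono : Monotone u) :
    univ.image u = Icc (u ⊥) (u ⊤) := by
  refine coe_injective ?_
  rw [coe_image, coe_univ, ← Set.Icc_bot_top, hv.image_Icc hmono bot_le, coe_Icc]

theorem image_univ_max_min (hu : CovByLipschitz u) (hw : CovByLipschitz w)
    (hum : Monotone u) (hwm : Monotone w) (himg : univ.image w = univ.image u) :
    univ.image (fun a => max (u a) (w a)) = univ.image u ∧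
      univ.image (fun a => min (u a) (w a)) = univ.image u := by
  rw [image_univ_eq_Icc hu hum, image_univ_eq_Icc hw hwm, ← coe_inj, coe_Icc, coe_Icc,
    Set.Icc_eq_Icc_iff (hwm bot_le)] at himg
  rw [image_univ_eq_Icc (hu.max hw) (hum.max hwm),
    image_univ_eq_Icc (hu.min hw) (hum.min hwm), image_univ_eq_Icc hu hum, himg.1, himg.2]
  simp

end Games

theorem phi_add_phi_of_tau {n : ℕ} {J : Type*} [Fintype J] [DecidableEq J]
    {v₁ v₂ v₃ v₄ : (Fin n → J) → ℤ} (i : Fin n)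
    (h₂ : univ.image v₂ = univ.image v₁) (h₃ : univ.image v₃ = univ.image v₁)
    (h₄ : univ.image v₄ = univ.image v₁)
    (htau : ∀ π a, tau v₁ π a i + tau v₂ π a i = tau v₃ π a i + tau v₄ π a i) :
    phi v₁ i + phi v₂ i = phi v₃ i + phi v₄ i := by
  simp only [phi, h₂, h₃, h₄, ← mul_add, ← sum_add_distrib]
  congr 1
  exact sum_congr rfl fun π _ => sum_congr rfl fun a _ => by exact_mod_cast htau π a

theorem phi_transfer_general {n : ℕ} {J : Type*} [Fintype J] [LinearOrder J]
    (K : Finset ℤ)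
    (u w : (Fin n → J) → ℤ)
    (hum : Monotone u) (hwm : Monotone w)
    (husurj : Finset.univ.image u = K) (hwsurj : Finset.univ.image w = K)
    (hur : OutputRough u) (hwr : OutputRough w) (i : Fin n) :
    phi u i + phi w i =
      phi (fun a => max (u a) (w a)) i + phi (fun a => min (u a) (w a)) i := by
  rcases isEmpty_or_nonempty J with _ | _
  · have : Nonempty (Fin n) := ⟨i⟩
    simp [phi]
  let := Fintype.toBoundedOrder J
  have hu := hur.covByLipschitz hum
  have hw := hwr.covByLipschitz hwm
  have himg : univ.image w = univ.image u := hwsurj.trans husurj.symm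
  obtain ⟨hmax, hmin⟩ := image_univ_max_min hu hw hum hwm himg
  exact phi_add_phi_of_tau i himg hmax hmin fun π a => tau_add_tau hu hw hum hwm π a i

/-- Lemma 5.2 (transfer axiom): for nontrivial, surjective, monotone, output-rough
games `u` and `w`, `φ_i(u) + φ_i(w) = φ_i(u ∨ w) + φ_i(u ∧ w)` for every player `i`. -/
theorem phi_transfer {n : ℕ} {J : Type*} [Fintype J] [LinearOrder J]
    (K : Finset ℤ) (hK : 2 ≤ K.card)
    (u w : (Fin n → J) → ℤ)
    (hum : Monotone u) (hwm : Monotone w)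
    (husurj : Finset.univ.image u = K) (hwsurj : Finset.univ.image w = K)
    (hur : OutputRough u) (hwr : OutputRough w) (i : Fin n) :
    phi u i + phi w i =
      phi (fun a => max (u a) (w a)) i + phi (fun a => min (u a) (w a)) i :=
  phi_transfer_general K u w hum hwm husurj hwsurj hur hwr i
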